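/- (Proposition on SUSY pairing of Bethe roots) Let N ≥ 2, m ≥ 0, and λ₁,…,λ_m ∈ ℂ with λᵢ ≠ η for all i. If λ₁,…,λ_m satisfy the Bethe equations for the length-N chain, then the extended set λ₁,…,λ_m, λ_{m+1} := η satisfies the Bethe equations for the length-(N−1) chain. -/
import Mathlib


noncomputable section
open Complex Matrix

/-- Spin configurations of a chain of `N` sites: `true` encodes `v₊`, `false` encodes `v₋`.
The site with label `i ∈ {1,…,N}` corresponds to the index `i-1 : Fin N`
(so the leftmost site `N` is the index `N-1`). -/
abbrev Conf (N : ℕ) := Fin N → Bool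

/-- The combinatorial-point parameter `η = 2πi/3`. -/
def ηc : ℂ := 2 * (Real.pi : ℂ) * Complex.I / 3

/-- `a(u) = sinh(u+η)/sinh η`. -/
def aF (u : ℂ) : ℂ := Complex.sinh (u + ηc) / Complex.sinh ηc
/-- `b(u) = sinh(u)/sinh η`. -/
def bF (u : ℂ) : ℂ := Complex.sinh u / Complex.sinh ηc
/-- `c(u) = 1`. -/
def cF (_ : ℂ) : ℂ := 1
/-- `d(u) = sinh(u-η)/sinh η`. -/
def dF (u : ℂ) : ℂ := Complex.sinh (u - ηc) / Complex.sinh ηc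
/-- `Δ₊^(N)(u) = a(u)^{2N} sinh(u-η)/sinh η`. -/
def DeltaP (N : ℕ) (u : ℂ) : ℂ :=
  aF u ^ (2 * N) * Complex.sinh (u - ηc) / Complex.sinh ηc

/-- `Δ₋^(N)(u) = -b(u)^{2N} sinh(2u) sinh(u+2η)/sinh η`. -/
def DeltaM (N : ℕ) (u : ℂ) : ℂ :=
  -(bF u ^ (2 * N)) * Complex.sinh (2 * u) * Complex.sinh (u + 2 * ηc) / Complex.sinh ηc

/-- `λ₁,…,λ_m` satisfy the Bethe equations for the length-`N` chain (cross-multiplied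
form): for every `j`,
`-sinh(2λⱼ) Δ₊^(N)(λⱼ) ∏_{k≠j} sinh(λⱼ-λₖ-η) sinh(λⱼ+λₖ)
  = Δ₋^(N)(λⱼ) ∏_{k≠j} sinh(λⱼ-λₖ+η) sinh(λⱼ+λₖ+2η)`. -/
def BetheEq (N m : ℕ) (lam : Fin m → ℂ) : Prop :=
  ∀ j : Fin m,
    -Complex.sinh (2 * lam j) * DeltaP N (lam j) *
        ∏ k ∈ Finset.univ.erase j,
          (Complex.sinh (lam j - lam k - ηc) * Complex.sinh (lam j + lam k))
      = DeltaM N (lam j) *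
        ∏ k ∈ Finset.univ.erase j,
          (Complex.sinh (lam j - lam k + ηc) * Complex.sinh (lam j + lam k + 2 * ηc))

/-- `sinh η ≠ 0` for `η = 2πi/3`. -/
lemma sinh_ηc_ne_zero : Complex.sinh ηc ≠ 0 := by
  have h : ηc = ((2 * Real.pi / 3 : ℝ) : ℂ) * Complex.I := by
    unfold ηc; push_cast; ring
  rw [h, Complex.sinh_mul_I, ← Complex.ofReal_sin]
  have hpos : 0 < Real.sin (2 * Real.pi / 3) := by
    apply Real.sin_pos_of_pos_of_lt_pi <;> nlinarith [Real.pi_pos]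
  exact mul_ne_zero (by exact_mod_cast hpos.ne') Complex.I_ne_zero

/-- Periodicity: `sinh (z + 3η) = sinh z`. -/
lemma sinh_add_three_ηc (z : ℂ) : Complex.sinh (z + 3 * ηc) = Complex.sinh z := by
  have h3 : (3 : ℂ) * ηc = (2 * Real.pi) * Complex.I := by unfold ηc; ring
  rw [h3, Complex.sinh_add, Complex.sinh_mul_I, Complex.cosh_mul_I,
    Complex.sin_two_pi, Complex.cos_two_pi]
  ring

lemma prod_erase_castSucc {M : Type*} [CommMonoid M] {m : ℕ} (i : Fin m)
    (f : Fin (m + 1) → M) :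
    ∏ k ∈ Finset.univ.erase i.castSucc, f k
      = (∏ k ∈ Finset.univ.erase i, f k.castSucc) * f (Fin.last m) := by
  have hset : (Finset.univ.erase i.castSucc : Finset (Fin (m + 1)))
      = insert (Fin.last m) ((Finset.univ.erase i).image Fin.castSucc) := by
    ext k
    simp only [Finset.mem_erase, Finset.mem_univ, and_true, Finset.mem_insert,
      Finset.mem_image]
    constructor
    · intro hk
      rcases Fin.eq_castSucc_or_eq_last k with ⟨a, rfl⟩ | rfl
      · refine Or.inr ⟨a, ?_, rfl⟩
        intro h; exact hk (by rw [h])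
      · exact Or.inl rfl
    · rintro (rfl | ⟨a, ha, rfl⟩)
      · exact (Fin.castSucc_lt_last i).ne'
      · intro h; exact ha (Fin.castSucc_inj.mp h)
  have hlast : Fin.last m ∉ (Finset.univ.erase i).image Fin.castSucc := by
    simp only [Finset.mem_image, not_exists]
    rintro a ⟨-, ha⟩
    exact absurd ha (Fin.castSucc_lt_last a).ne
  rw [hset, Finset.prod_insert hlast,
    Finset.prod_image (fun a _ b _ h => Fin.castSucc_inj.mp h), mul_comm]

/-- SUSY pairing of Bethe roots: if `N ≥ 2`, `λ₁,…,λ_m` with `λᵢ ≠ η` for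
all `i` satisfy the Bethe equations for the length-`N` chain, then
`λ₁,…,λ_m, λ_{m+1} := η` satisfy the Bethe equations for the length-`(N-1)` chain. -/
theorem bethe_root_pairing (N m : ℕ) (hN : 2 ≤ N) (lam : Fin m → ℂ)
    (hlam : ∀ i, lam i ≠ ηc) (hB : BetheEq N m lam) :
    BetheEq (N - 1) (m + 1) (Fin.snoc lam ηc) := by
  intro j
  rcases Fin.eq_castSucc_or_eq_last j with ⟨i, rfl⟩ | rfl
  · -- an original root
    rw [prod_erase_castSucc i, prod_erase_castSucc i]
    simp only [Fin.snoc_castSucc, Fin.snoc_last]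
    have e1 : Complex.sinh (lam i - ηc - ηc) = Complex.sinh (lam i + ηc) := by
      rw [show lam i + ηc = (lam i - ηc - ηc) + 3 * ηc by ring, sinh_add_three_ηc]
    have e2 : Complex.sinh (lam i + ηc + 2 * ηc) = Complex.sinh (lam i) := by
      rw [show lam i + ηc + 2 * ηc = lam i + 3 * ηc by ring, sinh_add_three_ηc]
    have e3 : Complex.sinh (lam i - ηc + ηc) = Complex.sinh (lam i) := by ring_nf
    rw [e1, e2, e3]
    have h2N : 2 * N = 2 * (N - 1) + 2 := by omega
    have hs := sinh_ηc_ne_zero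
    have DP : DeltaP (N - 1) (lam i) * Complex.sinh (lam i + ηc) ^ 2
        = DeltaP N (lam i) * Complex.sinh ηc ^ 2 := by
      unfold DeltaP aF
      rw [h2N, pow_add]
      field_simp
    have DM : DeltaM (N - 1) (lam i) * Complex.sinh (lam i) ^ 2
        = DeltaM N (lam i) * Complex.sinh ηc ^ 2 := by
      unfold DeltaM bF
      rw [h2N, pow_add]
      field_simp
    have hBi := hB i
    set Pm := ∏ k ∈ Finset.univ.erase i,
      (Complex.sinh (lam i - lam k - ηc) * Complex.sinh (lam i + lam k)) with hPm
    set Pp := ∏ k ∈ Finset.univ.erase i,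
      (Complex.sinh (lam i - lam k + ηc) * Complex.sinh (lam i + lam k + 2 * ηc)) with hPp
    linear_combination (-Complex.sinh (2 * lam i) * Pm) * DP - Pp * DM
      + Complex.sinh ηc ^ 2 * hBi
  · -- the new root η
    simp only [Fin.snoc_last]
    have h1 : DeltaP (N - 1) ηc = 0 := by
      simp [DeltaP, sub_self, Complex.sinh_zero]
    have h2 : DeltaM (N - 1) ηc = 0 := by
      have h0 : Complex.sinh (ηc + 2 * ηc) = 0 := by
        rw [show ηc + 2 * ηc = 0 + 3 * ηc by ring, sinh_add_three_ηc, Complex.sinh_zero]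
      simp [DeltaM, h0]
    rw [h1, h2]
    ring
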